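/- arXiv:0810.1532 — 2 statements merged into one kernel-verified Lean document; each statement's English description precedes it below -/
import Mathlib

section
/- Fix ℓ ≥ 2 and 1 ≤ i_1 < ⋯ < i_k ≤ ℓ with i_{r+1} > i_r + 1 for all 1 ≤ r < k, and let Ψ = Ψ(i_1,…,i_k) with associated quiver Δ_Ψ on ℕ^ℓ. Let λ ∈ ℕ^ℓ and assume that λ has at least one arrow of Δ_Ψ into or out of it. Then the connected component of λ in Δ_Ψ is isomorphic, as a quiver, to Ξ_a(m), where m = (m_1,…,m_k) with m_t = λ_{i_t−1} + λ_{i_t} (with m_t = ∞ when i_t = 1) and a ∈ {0,1} is determined by a ≡ λ_{i_1} + ⋯ + λ_{i_k} (mod 2). -/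
/-- The coordinates of the type `C_ℓ` root `β_{i,j}` (`1 ≤ i ≤ j ≤ ℓ`, `1`-based positions)
with respect to the fundamental weights: the `t`-th coordinate is the multiplicity of `t` in
the multiset `{i, j}` minus its multiplicity in the multiset `{i−1, j−1}`. -/
def betaC (ℓ i j : ℕ) : Fin ℓ → ℤ := fun t =>
  (if (t : ℕ) + 1 = i then 1 else 0) + (if (t : ℕ) + 1 = j then 1 else 0)
    - (if (t : ℕ) + 2 = i then 1 else 0) - (if (t : ℕ) + 2 = j then 1 else 0)

/-- The arrow relation of the quiver `Δ_Ψ` on `ℕ^ℓ` where `Ψ` is given by a set `S` of index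
pairs `(i, j)` with `i ≤ j` : for `i < j` there is an arrow `λ ← λ + β_{i,j}` whenever
`λ_{i−1} ≥ 1` (no condition when `i = 1`) and `λ_{j−1} ≥ 1`; for `i = j` there is an
arrow `λ ← λ + β_{i,i}` whenever `λ_{i−1} ≥ 2` (no condition when `i = 1`). -/
def arrowC (ℓ : ℕ) (S : Set (ℕ × ℕ)) (lam mu : Fin ℓ → ℕ) : Prop :=
  ∃ p ∈ S, (∀ t : Fin ℓ, (mu t : ℤ) = (lam t : ℤ) + betaC ℓ p.1 p.2 t) ∧
    (if p.1 = p.2 then ∀ t : Fin ℓ, (t : ℕ) + 2 = p.1 → 2 ≤ lam t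
     else (∀ t : Fin ℓ, (t : ℕ) + 2 = p.1 → 1 ≤ lam t) ∧
       (∀ t : Fin ℓ, (t : ℕ) + 2 = p.2 → 1 ≤ lam t))

/-- The coordinate of `λ ∈ ℕ^ℓ` at the `1`-based position `pos` (and `0` out of range). -/
def coord (ℓ : ℕ) (lam : Fin ℓ → ℕ) (pos : ℕ) : ℕ :=
  if h : 1 ≤ pos ∧ pos ≤ ℓ then lam ⟨pos - 1, by omega⟩ else 0

/-- Vertices of `Ξ_a(m)` (bounds in `ℕ ∪ {∞}`). -/
def xiVert {k : ℕ} (m : Fin k → ℕ∞) (a : ℕ) (x : Fin k → ℕ) : Prop :=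
  (∀ i, (x i : ℕ∞) ≤ m i) ∧ (∑ i, x i) % 2 = a

/-- Arrows of `Ξ(m)` : `x ← x + 2e_j` when `x j + 2 ≤ m j`, and `x ← x + e_i + e_j` when
`i < j`, `x i + 1 ≤ m i` and `x j + 1 ≤ m j`. -/
def xiArrow {k : ℕ} (m : Fin k → ℕ∞) (x y : Fin k → ℕ) : Prop :=
  (∃ j, (x j : ℕ∞) + 2 ≤ m j ∧ y = x + Pi.single j 2) ∨
    (∃ i j, i < j ∧ (x i : ℕ∞) + 1 ≤ m i ∧ (x j : ℕ∞) + 1 ≤ m j ∧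
      y = x + Pi.single i 1 + Pi.single j 1)

/-!
Under the gap condition the positions `i_t` and `i_t - 1` are pairwise distinct, so the arrow
attached to `β_{i_r,i_s}` moves one unit from position `i_r - 1` to `i_r` and one unit from
`i_s - 1` to `i_s`, and fixes every other coordinate. Hence on a component the coordinates off
these positions, the sums `λ_{i_t - 1} + λ_{i_t}` and the parity of `λ_{i_1} + ⋯ + λ_{i_k}` are
constant; a vertex with these invariants is determined by `x = (λ_{i_1}, …, λ_{i_k})`, which
ranges exactly over `Ξ_a(m)`, and arrows correspond to arrows.

Conversely, every vertex with these invariants lies in the component, because `Ξ_a(m)` is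
connected as soon as it has an arrow: descending arrows bring every vertex down to `0` or to a
unit vector `e_i`, and two unit vectors `e_i`, `e_j` lie below a common vertex `e_i + e_j + e_r`,
which exists because the larger end of the given arrow is a vertex of size at least `3`.
-/

open Relation

section Xi

variable {k : ℕ} {m : Fin k → ℕ∞} {a : ℕ} {x y : Fin k → ℕ}

def XiAdj (m : Fin k → ℕ∞) (a : ℕ) (x y : Fin k → ℕ) : Prop :=
  xiVert m a x ∧ xiVert m a y ∧ SymmGen (xiArrow m) x y

lemma sum_add_single_add_single (x : Fin k → ℕ) (i j : Fin k) :
    ∑ t, (x + Pi.single i 1 + Pi.single j 1 : Fin k → ℕ) t = ∑ t, x t + 2 := by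
  simp only [Pi.add_apply, Finset.sum_add_distrib, Finset.sum_pi_single', Finset.mem_univ, if_true,
    add_assoc]

lemma xiArrow_iff : xiArrow m x y ↔ ∃ i j, y = x + Pi.single i 1 + Pi.single j 1 ∧
    ((y i : ℕ) : ℕ∞) ≤ m i ∧ ((y j : ℕ) : ℕ∞) ≤ m j := by
  constructor
  · rintro (⟨j, hj, rfl⟩ | ⟨i, j, hij, hi, hj, rfl⟩)
    · refine ⟨j, j, by rw [add_assoc, ← Pi.single_add], ?_, ?_⟩ <;> simpa using hj
    · refine ⟨i, j, rfl, ?_, ?_⟩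
      · simpa [Pi.single_apply, hij.ne] using hi
      · simpa [Pi.single_apply, hij.ne'] using hj
  · rintro ⟨i, j, rfl, hi, hj⟩
    rcases lt_trichotomy i j with hij | rfl | hij
    · right
      refine ⟨i, j, hij, ?_, ?_, rfl⟩
      · simpa [Pi.single_apply, hij.ne] using hi
      · simpa [Pi.single_apply, hij.ne'] using hj
    · left
      refine ⟨i, ?_, by rw [add_assoc, ← Pi.single_add]⟩
      simp only [Pi.add_apply, Pi.single_eq_same, Nat.cast_add, Nat.cast_one] at hi
      rwa [add_assoc, one_add_one_eq_two] at hi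
    · right
      refine ⟨j, i, hij, ?_, ?_, add_right_comm _ _ _⟩
      · simpa [Pi.single_apply, hij.ne] using hj
      · simpa [Pi.single_apply, hij.ne'] using hi

lemma xiArrow.sum_eq (h : xiArrow m x y) : ∑ t, y t = ∑ t, x t + 2 := by
  obtain ⟨i, j, rfl, -⟩ := xiArrow_iff.mp h
  exact sum_add_single_add_single x i j

lemma xiArrow.le (h : xiArrow m x y) : x ≤ y := by
  obtain ⟨i, j, rfl, -⟩ := xiArrow_iff.mp h
  intro t
  simp only [Pi.add_apply]
  omega

lemma xiArrow.xiVert_right (h : xiArrow m x y) (hx : xiVert m a x) : xiVert m a y := by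
  obtain ⟨i, j, rfl, hi, hj⟩ := xiArrow_iff.mp h
  refine ⟨fun t => ?_, by rw [sum_add_single_add_single, Nat.add_mod_right, hx.2]⟩
  by_cases hti : t = i
  · exact hti ▸ hi
  by_cases htj : t = j
  · exact htj ▸ hj
  simpa [Pi.single_apply, hti, htj] using hx.1 t

lemma xiArrow.xiVert_left (h : xiArrow m x y) (hy : xiVert m a y) : xiVert m a x :=
  ⟨fun t => (Nat.cast_le.mpr (h.le t)).trans (hy.1 t), by
    rw [← hy.2, h.sum_eq, Nat.add_mod_right]⟩

instance : Std.Symm (XiAdj m a) := ⟨fun _ _ ⟨hx, hy, h⟩ => ⟨hy, hx, h.symm⟩⟩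

lemma exists_eq_add_single (h : ∑ t, y t ≠ 0) :
    ∃ i, ∃ z : Fin k → ℕ, y = z + Pi.single i 1 ∧ ∑ t, z t + 1 = ∑ t, y t := by
  obtain ⟨i, -, hi⟩ := Finset.exists_ne_zero_of_sum_ne_zero h
  have hy : y = Function.update y i (y i - 1) + Pi.single i 1 := by
    ext t
    rcases eq_or_ne t i with rfl | ht
    · simp only [Pi.add_apply, Function.update_self, Pi.single_eq_same]
      omega
    · simp [ht]
  refine ⟨i, _, hy, ?_⟩
  conv_rhs => rw [hy]
  simp [Finset.sum_add_distrib]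

lemma exists_reflTransGen_sum_le_one (hy : xiVert m a y) :
    ∃ z, xiVert m a z ∧ ∑ t, z t ≤ 1 ∧ ReflTransGen (XiAdj m a) y z := by
  induction hn : ∑ t, y t using Nat.strong_induction_on generalizing y with
  | _ n ih =>
  by_cases h1 : n ≤ 1
  · exact ⟨y, hy, hn ▸ h1, .refl⟩
  obtain ⟨j, y', rfl, hy'⟩ := exists_eq_add_single (y := y) (by omega)
  obtain ⟨i, z, rfl, hz⟩ := exists_eq_add_single (y := y') (by omega)
  have harr : xiArrow m z (z + Pi.single i 1 + Pi.single j 1) :=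
    xiArrow_iff.mpr ⟨i, j, rfl, hy.1 i, hy.1 j⟩
  have hz' := harr.xiVert_left hy
  obtain ⟨w, hw, hw1, hzw⟩ := ih _ (by omega) hz' rfl
  exact ⟨w, hw, hw1, .head ⟨hy, hz', .of_rel_symm harr⟩ hzw⟩

lemma exists_add_single_le {v w : Fin k → ℕ} (hv : ∀ t, (v t : ℕ∞) ≤ m t)
    (hw : ∀ t, (w t : ℕ∞) ≤ m t) (h : ∑ t, v t < ∑ t, w t) :
    ∃ r, ∀ t, (((v + Pi.single r 1 : Fin k → ℕ) t : ℕ) : ℕ∞) ≤ m t := by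
  obtain ⟨r, -, hr⟩ := Finset.exists_lt_of_sum_lt h
  refine ⟨r, fun t => ?_⟩
  rcases eq_or_ne t r with rfl | htr
  · exact (Nat.cast_le.mpr (by simpa using hr)).trans (hw t)
  · simpa [htr] using hv t

lemma reflTransGen_xiAdj_single_single {i j : Fin k} {w : Fin k → ℕ}
    (hi : xiVert m a (Pi.single i 1)) (hj : xiVert m a (Pi.single j 1)) (hw : xiVert m a w)
    (h3 : 3 ≤ ∑ t, w t) : ReflTransGen (XiAdj m a) (Pi.single i 1) (Pi.single j 1) := by
  rcases eq_or_ne i j with rfl | hij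
  · exact .refl
  have hv : ∀ t, (((Pi.single i 1 + Pi.single j 1 : Fin k → ℕ) t : ℕ) : ℕ∞) ≤ m t := by
    intro t
    rcases eq_or_ne t i with rfl | hti
    · simpa [hij] using hi.1 t
    · simpa [hti] using hj.1 t
  have hsum : ∑ t, (Pi.single i 1 + Pi.single j 1 : Fin k → ℕ) t = 2 := by
    simp only [Pi.add_apply, Finset.sum_add_distrib, Finset.sum_pi_single', Finset.mem_univ,
      if_true]
  obtain ⟨r, hr⟩ := exists_add_single_le hv hw.1 (by omega)
  have harr_i : xiArrow m (Pi.single i 1) (Pi.single i 1 + Pi.single j 1 + Pi.single r 1) :=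
    xiArrow_iff.mpr ⟨j, r, rfl, hr j, hr r⟩
  have harr_j : xiArrow m (Pi.single j 1) (Pi.single i 1 + Pi.single j 1 + Pi.single r 1) :=
    xiArrow_iff.mpr ⟨i, r, by rw [add_comm (Pi.single i 1)], hr i, hr r⟩
  have hv' := harr_i.xiVert_right hi
  exact .head ⟨hi, hv', .of_rel harr_i⟩ (.single ⟨hv', hj, .of_rel_symm harr_j⟩)

theorem reflTransGen_xiAdj_of_exists_xiArrow (hex : ∃ u v, xiVert m a u ∧ xiArrow m u v)
    (hx : xiVert m a x) (hy : xiVert m a y) : ReflTransGen (XiAdj m a) x y := by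
  obtain ⟨x', hx', hx1, hxx'⟩ := exists_reflTransGen_sum_le_one hx
  obtain ⟨y', hy', hy1, hyy'⟩ := exists_reflTransGen_sum_le_one hy
  refine hxx'.trans (ReflTransGen.trans ?_ (symm hyy'))
  have hsum : ∑ t, x' t = ∑ t, y' t := by
    have := hx'.2; have := hy'.2; omega
  rcases Nat.le_one_iff_eq_zero_or_eq_one.mp hx1 with h0 | h1
  · have hzero : ∀ z : Fin k → ℕ, ∑ t, z t = 0 → z = 0 := fun z hz =>
      funext fun t => Finset.sum_eq_zero_iff.mp hz t (Finset.mem_univ t)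
    rw [hzero x' h0, hzero y' (hsum ▸ h0)]
  · have hsingle : ∀ z : Fin k → ℕ, ∑ t, z t = 1 → ∃ i, z = Pi.single i 1 := by
      intro z hz
      obtain ⟨i, z', rfl, hz'⟩ := exists_eq_add_single (y := z) (by omega)
      have : z' = 0 := funext fun t =>
        Finset.sum_eq_zero_iff.mp (by omega : ∑ t, z' t = 0) t (Finset.mem_univ t)
      exact ⟨i, by rw [this, zero_add]⟩
    obtain ⟨i, rfl⟩ := hsingle x' h1
    obtain ⟨j, rfl⟩ := hsingle y' (hsum ▸ h1)
    obtain ⟨u, v, hu, huv⟩ := hex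
    refine reflTransGen_xiAdj_single_single hx' hy' (huv.xiVert_right hu) ?_
    have := hu.2; have := hx'.2
    rw [huv.sum_eq]
    omega

end Xi

section Delta

-- `j : Fin ℓ` is the position `j + 1` of the paper: `j + 1 = ii t` says that `j` is the position
-- `i_t`, and `j + 2 = ii t` that it is the position `i_t - 1`.
variable {ℓ k : ℕ} {ii : Fin k → ℕ}

structure IsGapped (ℓ : ℕ) (ii : Fin k → ℕ) : Prop where
  one_le : ∀ t, 1 ≤ ii t
  le : ∀ t, ii t ≤ ℓ
  add_two_le : ∀ ⦃s t⦄, s < t → ii s + 2 ≤ ii t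

lemma IsGapped.of_strictMono (hii : StrictMono ii) (h1 : ∀ t, 1 ≤ ii t) (hub : ∀ t, ii t ≤ ℓ)
    (hgap : ∀ p q : Fin k, (q : ℕ) = (p : ℕ) + 1 → ii p + 1 < ii q) : IsGapped ℓ ii where
  one_le := h1
  le := hub
  add_two_le s t hst := by
    have hs : (s : ℕ) + 1 < k := by omega
    have := hii.monotone (show (⟨s + 1, hs⟩ : Fin k) ≤ t from Fin.mk_le_of_le_val hst)
    have := hgap s ⟨s + 1, hs⟩ rfl
    omega

lemma coord_of_add_one_eq {μ : Fin ℓ → ℕ} {j : Fin ℓ} {p : ℕ} (h : (j : ℕ) + 1 = p) :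
    coord ℓ μ p = μ j := by
  subst h
  simp [coord]

lemma betaC_eq_zero {r s : Fin k} {j : Fin ℓ} (h1 : ∀ t, (j : ℕ) + 1 ≠ ii t)
    (h2 : ∀ t, (j : ℕ) + 2 ≠ ii t) : betaC ℓ (ii r) (ii s) j = 0 := by
  simp [betaC, h1, h2]

lemma betaC_comm (i j : ℕ) : betaC ℓ i j = betaC ℓ j i := by
  funext t
  simp only [betaC]
  ring

variable (hI : IsGapped ℓ ii)
include hI

lemma IsGapped.eq_iff {s t : Fin k} : ii s = ii t ↔ s = t := by
  refine ⟨fun h => ?_, congrArg ii⟩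
  rcases lt_trichotomy s t with hst | hst | hst
  · have := hI.add_two_le hst; omega
  · exact hst
  · have := hI.add_two_le hst; omega

lemma IsGapped.add_one_ne (s t : Fin k) : ii s + 1 ≠ ii t := by
  rcases lt_trichotomy s t with hst | rfl | hst
  · have := hI.add_two_le hst; omega
  · omega
  · have := hI.add_two_le hst; omega

lemma IsGapped.exists_add_one_eq (t : Fin k) : ∃ j : Fin ℓ, (j : ℕ) + 1 = ii t :=
  ⟨⟨ii t - 1, by have := hI.one_le t; have := hI.le t; omega⟩, by
    have := hI.one_le t; dsimp only; omega⟩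

lemma IsGapped.exists_add_two_eq {t : Fin k} (ht : ii t ≠ 1) : ∃ j : Fin ℓ, (j : ℕ) + 2 = ii t :=
  ⟨⟨ii t - 2, by have := hI.one_le t; have := hI.le t; omega⟩, by
    have := hI.one_le t; dsimp only; omega⟩

lemma betaC_of_add_one_eq {r s t : Fin k} {j : Fin ℓ} (h : (j : ℕ) + 1 = ii t) :
    betaC ℓ (ii r) (ii s) j = ((Pi.single r 1 + Pi.single s 1 : Fin k → ℕ) t : ℤ) := by
  have h2 : ∀ q, (j : ℕ) + 2 ≠ ii q := fun q => by have := hI.add_one_ne t q; omega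
  simp [betaC, h, h2, hI.eq_iff, Pi.single_apply]

lemma betaC_of_add_two_eq {r s t : Fin k} {j : Fin ℓ} (h : (j : ℕ) + 2 = ii t) :
    betaC ℓ (ii r) (ii s) j = -((Pi.single r 1 + Pi.single s 1 : Fin k → ℕ) t : ℤ) := by
  have h1 : ∀ q, (j : ℕ) + 1 ≠ ii q := fun q => by have := hI.add_one_ne q t; omega
  simp [betaC, h, h1, hI.eq_iff, Pi.single_apply, sub_eq_add_neg, add_comm]

/-- Under the gap condition the side conditions in `arrowC` only say that `v` has no negative
coordinate. -/
lemma arrowC_iff {S : Set (ℕ × ℕ)} (hS : S = {pq | ∃ p q : Fin k, p ≤ q ∧ pq = (ii p, ii q)})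
    {u v : Fin ℓ → ℕ} :
    arrowC ℓ S u v ↔ ∃ r s, ∀ j, (v j : ℤ) = u j + betaC ℓ (ii r) (ii s) j := by
  subst hS
  constructor
  · rintro ⟨_, ⟨r, s, -, rfl⟩, hv, -⟩
    exact ⟨r, s, hv⟩
  rintro ⟨r, s, hv⟩
  wlog hrs : r ≤ s generalizing r s
  · exact this s r (by rwa [betaC_comm]) (le_of_not_ge hrs)
  refine ⟨(ii r, ii s), ⟨r, s, hrs, rfl⟩, hv, ?_⟩
  dsimp only
  split_ifs with hrs'
  · obtain rfl := hI.eq_iff.mp hrs'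
    intro j hj
    have := hv j
    rw [betaC_of_add_two_eq hI hj] at this
    simp only [Pi.add_apply, Pi.single_eq_same] at this
    omega
  · have hne : r ≠ s := fun h => hrs' (congrArg ii h)
    refine ⟨fun j hj => ?_, fun j hj => ?_⟩
    · have := hv j
      rw [betaC_of_add_two_eq hI hj] at this
      simp only [Pi.add_apply, Pi.single_eq_same, Pi.single_eq_of_ne hne] at this
      omega
    · have := hv j
      rw [betaC_of_add_two_eq hI hj] at this
      simp only [Pi.add_apply, Pi.single_eq_same, Pi.single_eq_of_ne hne.symm] at this
      omega

end Delta

section Component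

variable {ℓ k : ℕ} {ii : Fin k → ℕ} {lam : Fin ℓ → ℕ} {a : ℕ}

def proj (ii : Fin k → ℕ) (μ : Fin ℓ → ℕ) : Fin k → ℕ := fun t => coord ℓ μ (ii t)

def bound (ii : Fin k → ℕ) (lam : Fin ℓ → ℕ) (t : Fin k) : ℕ∞ :=
  if ii t = 1 then ⊤ else ((coord ℓ lam (ii t - 1) + coord ℓ lam (ii t) : ℕ) : ℕ∞)

/-- The invariants of the connected component of `lam` in `Δ_Ψ`: every arrow moves one unit
from position `i_t - 1` to position `i_t`, for one or two indices `t`. -/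
structure Conserved (ii : Fin k → ℕ) (lam : Fin ℓ → ℕ) (a : ℕ) (μ : Fin ℓ → ℕ) : Prop where
  eq_of_ne : ∀ j : Fin ℓ, (∀ t, (j : ℕ) + 1 ≠ ii t) → (∀ t, (j : ℕ) + 2 ≠ ii t) → μ j = lam j
  add_eq : ∀ (j : Fin ℓ) t, (j : ℕ) + 2 = ii t →
    μ j + coord ℓ μ (ii t) = lam j + coord ℓ lam (ii t)
  parity : (∑ t, proj ii μ t) % 2 = a

noncomputable def lift (ii : Fin k → ℕ) (lam : Fin ℓ → ℕ) (x : Fin k → ℕ) : Fin ℓ → ℕ := fun j =>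
  if h : ∃ t, (j : ℕ) + 1 = ii t then x h.choose
  else if h : ∃ t, (j : ℕ) + 2 = ii t then lam j + coord ℓ lam (j + 2) - x h.choose
  else lam j

lemma conserved_self (ha : a = (∑ t, proj ii lam t) % 2) : Conserved ii lam a lam :=
  ⟨fun _ _ _ => rfl, fun _ _ _ => rfl, ha.symm⟩

lemma bound_of_add_two_eq {j : Fin ℓ} {t : Fin k} (h : (j : ℕ) + 2 = ii t) :
    bound ii lam t = ((lam j + coord ℓ lam (ii t) : ℕ) : ℕ∞) := by
  rw [bound, if_neg (by omega), coord_of_add_one_eq (by omega : (j : ℕ) + 1 = ii t - 1)]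

lemma lift_of_ne {x : Fin k → ℕ} {j : Fin ℓ} (h1 : ∀ t, (j : ℕ) + 1 ≠ ii t)
    (h2 : ∀ t, (j : ℕ) + 2 ≠ ii t) : lift ii lam x j = lam j := by
  rw [lift, dif_neg (not_exists.mpr h1), dif_neg (not_exists.mpr h2)]

variable (hI : IsGapped ℓ ii)
include hI

lemma Conserved.xiVert {μ : Fin ℓ → ℕ} (h : Conserved ii lam a μ) :
    xiVert (bound ii lam) a (proj ii μ) := by
  refine ⟨fun t => ?_, h.parity⟩
  by_cases ht : ii t = 1
  · simp [bound, ht]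
  obtain ⟨j, hj⟩ := hI.exists_add_two_eq ht
  have := h.add_eq j t hj
  rw [bound_of_add_two_eq hj]
  exact_mod_cast (by simp only [proj]; omega : proj ii μ t ≤ lam j + coord ℓ lam (ii t))

lemma proj_eq_of_eq_add_betaC {u v : Fin ℓ → ℕ} {r s : Fin k}
    (hv : ∀ j, (v j : ℤ) = u j + betaC ℓ (ii r) (ii s) j) :
    proj ii v = proj ii u + Pi.single r 1 + Pi.single s 1 := by
  funext t
  obtain ⟨j, hj⟩ := hI.exists_add_one_eq t
  have := hv j
  rw [betaC_of_add_one_eq hI hj] at this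
  simp only [proj, Pi.add_apply, coord_of_add_one_eq hj] at this ⊢
  push_cast at this
  omega

lemma conserved_iff_of_eq_add_betaC {u v : Fin ℓ → ℕ} {r s : Fin k}
    (hv : ∀ j, (v j : ℤ) = u j + betaC ℓ (ii r) (ii s) j) :
    Conserved ii lam a u ↔ Conserved ii lam a v := by
  have hproj := proj_eq_of_eq_add_betaC hI hv
  have hsum : ∑ t, proj ii v t = ∑ t, proj ii u t + 2 := by
    rw [hproj, sum_add_single_add_single]
  have hadd : ∀ (j : Fin ℓ) t, (j : ℕ) + 2 = ii t →
      v j + coord ℓ v (ii t) = u j + coord ℓ u (ii t) := by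
    intro j t hj
    have hvj := hv j
    rw [betaC_of_add_two_eq hI hj, Pi.add_apply] at hvj
    have := congrFun hproj t
    simp only [proj, Pi.add_apply] at this
    push_cast at hvj
    omega
  have hne : ∀ j : Fin ℓ, (∀ t, (j : ℕ) + 1 ≠ ii t) → (∀ t, (j : ℕ) + 2 ≠ ii t) → v j = u j :=
    fun j h1 h2 => by have := hv j; rw [betaC_eq_zero h1 h2] at this; omega
  constructor
  · intro hu
    refine ⟨fun j h1 h2 => (hne j h1 h2).trans (hu.eq_of_ne j h1 h2),
      fun j t hj => (hadd j t hj).trans (hu.add_eq j t hj), ?_⟩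
    rw [hsum, Nat.add_mod_right, hu.parity]
  · intro hv'
    refine ⟨fun j h1 h2 => (hne j h1 h2).symm.trans (hv'.eq_of_ne j h1 h2),
      fun j t hj => (hadd j t hj).symm.trans (hv'.add_eq j t hj), ?_⟩
    rw [← hv'.parity, hsum, Nat.add_mod_right]

lemma eq_add_betaC_iff_proj_eq {u v : Fin ℓ → ℕ} {r s : Fin k} (hu : Conserved ii lam a u)
    (hv : Conserved ii lam a v) :
    (∀ j, (v j : ℤ) = u j + betaC ℓ (ii r) (ii s) j) ↔
      proj ii v = proj ii u + Pi.single r 1 + Pi.single s 1 := by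
  refine ⟨proj_eq_of_eq_add_betaC hI, fun hp j => ?_⟩
  by_cases h1 : ∃ t, (j : ℕ) + 1 = ii t
  · obtain ⟨t, ht⟩ := h1
    have := congrFun hp t
    simp only [proj, Pi.add_apply, coord_of_add_one_eq ht] at this
    rw [betaC_of_add_one_eq hI ht, Pi.add_apply]
    push_cast
    omega
  by_cases h2 : ∃ t, (j : ℕ) + 2 = ii t
  · obtain ⟨t, ht⟩ := h2
    have := congrFun hp t
    have := hu.add_eq j t ht
    have := hv.add_eq j t ht
    simp only [proj, Pi.add_apply] at *
    rw [betaC_of_add_two_eq hI ht, Pi.add_apply]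
    push_cast
    omega
  simp only [not_exists] at h1 h2
  rw [betaC_eq_zero h1 h2, hu.eq_of_ne j h1 h2, hv.eq_of_ne j h1 h2, add_zero]

lemma arrowC_iff_xiArrow {S : Set (ℕ × ℕ)}
    (hS : S = {pq | ∃ p q : Fin k, p ≤ q ∧ pq = (ii p, ii q)}) {u v : Fin ℓ → ℕ}
    (hu : Conserved ii lam a u) (hv : Conserved ii lam a v) :
    arrowC ℓ S u v ↔ xiArrow (bound ii lam) (proj ii u) (proj ii v) := by
  rw [arrowC_iff hI hS, xiArrow_iff]
  have hb := (hv.xiVert hI).1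
  refine exists₂_congr fun r s => ?_
  rw [eq_add_betaC_iff_proj_eq hI hu hv]
  exact ⟨fun h => ⟨h, hb r, hb s⟩, And.left⟩

lemma lift_of_add_one_eq {x : Fin k → ℕ} {j : Fin ℓ} {t : Fin k} (h : (j : ℕ) + 1 = ii t) :
    lift ii lam x j = x t := by
  have hex : ∃ t, (j : ℕ) + 1 = ii t := ⟨t, h⟩
  rw [lift, dif_pos hex, hI.eq_iff.mp (hex.choose_spec.symm.trans h)]

lemma lift_of_add_two_eq {x : Fin k → ℕ} {j : Fin ℓ} {t : Fin k} (h : (j : ℕ) + 2 = ii t) :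
    lift ii lam x j = lam j + coord ℓ lam (ii t) - x t := by
  have h1 : ¬∃ q, (j : ℕ) + 1 = ii q := fun ⟨q, hq⟩ => hI.add_one_ne q t (by omega)
  have hex : ∃ t, (j : ℕ) + 2 = ii t := ⟨t, h⟩
  rw [lift, dif_neg h1, dif_pos hex, hI.eq_iff.mp (hex.choose_spec.symm.trans h), h]

lemma proj_lift (x : Fin k → ℕ) : proj ii (lift ii lam x) = x := by
  funext t
  obtain ⟨j, hj⟩ := hI.exists_add_one_eq t
  rw [proj, coord_of_add_one_eq hj, lift_of_add_one_eq hI hj]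

lemma conserved_lift {x : Fin k → ℕ} (hx : xiVert (bound ii lam) a x) :
    Conserved ii lam a (lift ii lam x) where
  eq_of_ne _ h1 h2 := lift_of_ne h1 h2
  add_eq j t hj := by
    obtain ⟨j', hj'⟩ := hI.exists_add_one_eq t
    have hxt := hx.1 t
    rw [bound_of_add_two_eq hj, Nat.cast_le] at hxt
    rw [coord_of_add_one_eq hj', lift_of_add_one_eq hI hj', lift_of_add_two_eq hI hj]
    omega
  parity := by rw [proj_lift hI]; exact hx.2

lemma lift_proj {μ : Fin ℓ → ℕ} (h : Conserved ii lam a μ) : lift ii lam (proj ii μ) = μ := by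
  funext j
  by_cases h1 : ∃ t, (j : ℕ) + 1 = ii t
  · obtain ⟨t, ht⟩ := h1
    rw [lift_of_add_one_eq hI ht, proj, coord_of_add_one_eq ht]
  by_cases h2 : ∃ t, (j : ℕ) + 2 = ii t
  · obtain ⟨t, ht⟩ := h2
    have := h.add_eq j t ht
    rw [lift_of_add_two_eq hI ht, proj]
    omega
  simp only [not_exists] at h1 h2
  rw [lift_of_ne h1 h2, h.eq_of_ne j h1 h2]

noncomputable def conservedEquiv (lam : Fin ℓ → ℕ) (a : ℕ) :
    {μ // Conserved ii lam a μ} ≃ {x // xiVert (bound ii lam) a x} where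
  toFun μ := ⟨proj ii μ.1, μ.2.xiVert hI⟩
  invFun x := ⟨lift ii lam x.1, conserved_lift hI x.2⟩
  left_inv μ := Subtype.ext (lift_proj hI μ.2)
  right_inv x := Subtype.ext (proj_lift hI x.1)

lemma XiAdj.symmGen_arrowC_lift {S : Set (ℕ × ℕ)}
    (hS : S = {pq | ∃ p q : Fin k, p ≤ q ∧ pq = (ii p, ii q)}) {x y : Fin k → ℕ}
    (h : XiAdj (bound ii lam) a x y) : SymmGen (arrowC ℓ S) (lift ii lam x) (lift ii lam y) := by
  obtain ⟨hx, hy, hxy⟩ := h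
  have hx' := conserved_lift hI hx
  have hy' := conserved_lift hI hy
  rcases hxy with h | h
  · exact .of_rel ((arrowC_iff_xiArrow hI hS hx' hy').mpr (by rwa [proj_lift hI, proj_lift hI]))
  · exact .of_rel_symm ((arrowC_iff_xiArrow hI hS hy' hx').mpr
      (by rwa [proj_lift hI, proj_lift hI]))

lemma Conserved.of_symmGen {S : Set (ℕ × ℕ)}
    (hS : S = {pq | ∃ p q : Fin k, p ≤ q ∧ pq = (ii p, ii q)}) {u v : Fin ℓ → ℕ}
    (hu : Conserved ii lam a u) (h : SymmGen (arrowC ℓ S) u v) : Conserved ii lam a v := by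
  rcases h with h | h <;> obtain ⟨r, s, hrs⟩ := (arrowC_iff hI hS).mp h
  · exact (conserved_iff_of_eq_add_betaC hI hrs).mp hu
  · exact (conserved_iff_of_eq_add_betaC hI hrs).mpr hu

theorem reflTransGen_iff_conserved {S : Set (ℕ × ℕ)}
    (hS : S = {pq | ∃ p q : Fin k, p ≤ q ∧ pq = (ii p, ii q)})
    (ha : a = (∑ t, proj ii lam t) % 2) (hlam : ∃ μ, SymmGen (arrowC ℓ S) lam μ)
    {μ : Fin ℓ → ℕ} : ReflTransGen (SymmGen (arrowC ℓ S)) lam μ ↔ Conserved ii lam a μ := by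
  have hlam' := conserved_self ha
  refine ⟨fun h => ?_, fun hμ => ?_⟩
  · induction h with
    | refl => exact hlam'
    | tail _ hstep ih => exact ih.of_symmGen hI hS hstep
  have hex : ∃ x y, xiVert (bound ii lam) a x ∧ xiArrow (bound ii lam) x y := by
    obtain ⟨ν, hν⟩ := hlam
    have hν' := hlam'.of_symmGen hI hS hν
    rcases hν with h | h
    · exact ⟨_, _, hlam'.xiVert hI, (arrowC_iff_xiArrow hI hS hlam' hν').mp h⟩
    · exact ⟨_, _, hν'.xiVert hI, (arrowC_iff_xiArrow hI hS hν' hlam').mp h⟩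
  have hpath := (reflTransGen_xiAdj_of_exists_xiArrow hex (hlam'.xiVert hI) (hμ.xiVert hI)).lift
    (lift ii lam) fun _ _ => XiAdj.symmGen_arrowC_lift hI hS
  dsimp only [Function.onFun] at hpath
  rwa [lift_proj hI hlam', lift_proj hI hμ] at hpath

end Component

theorem stmt_10_general (ℓ k : ℕ)
    (ii : Fin k → ℕ) (hii : StrictMono ii) (h1 : ∀ t, 1 ≤ ii t) (hub : ∀ t, ii t ≤ ℓ)
    (hgap : ∀ p q : Fin k, (q : ℕ) = (p : ℕ) + 1 → ii p + 1 < ii q)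
    (S : Set (ℕ × ℕ)) (hS : S = {pq | ∃ p q : Fin k, p ≤ q ∧ pq = (ii p, ii q)})
    (lam : Fin ℓ → ℕ) (hlam : ∃ mu, arrowC ℓ S lam mu ∨ arrowC ℓ S mu lam)
    (m : Fin k → ℕ∞)
    (hm : ∀ t, m t = if ii t = 1 then (⊤ : ℕ∞) else
      ((coord ℓ lam (ii t - 1) + coord ℓ lam (ii t) : ℕ) : ℕ∞))
    (a : ℕ) (ha : a = (∑ t, coord ℓ lam (ii t)) % 2) :
    ∃ F : {mu : Fin ℓ → ℕ //
            Relation.ReflTransGen (fun u v => arrowC ℓ S u v ∨ arrowC ℓ S v u) lam mu} ≃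
          {x : Fin k → ℕ // xiVert m a x},
      ∀ u v, arrowC ℓ S u.1 v.1 ↔ xiArrow m (F u).1 (F v).1 := by
  have hI := IsGapped.of_strictMono hii h1 hub hgap
  obtain rfl : m = bound ii lam := funext hm
  have hcomp := fun μ => reflTransGen_iff_conserved hI hS ha hlam (μ := μ)
  exact ⟨(Equiv.subtypeEquivRight hcomp).trans (conservedEquiv hI lam a), fun u v =>
    arrowC_iff_xiArrow hI hS ((hcomp u.1).mp u.2) ((hcomp v.1).mp v.2)⟩

/-- for a regular `Ψ = Ψ(i_1, …, i_k)` in type `C_ℓ` and `λ ∈ ℕ^ℓ` having at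
least one arrow of `Δ_Ψ` into or out of it, the connected component of `λ` in `Δ_Ψ` is
isomorphic as a quiver to `Ξ_a(m)` with `m_t = λ_{i_t−1} + λ_{i_t}` (`∞` when `i_t = 1`)
and `a ≡ λ_{i_1} + ⋯ + λ_{i_k} (mod 2)`. -/
theorem stmt_10 (ℓ k : ℕ) (hℓ : 2 ≤ ℓ) (hk : 1 ≤ k)
    (ii : Fin k → ℕ) (hii : StrictMono ii) (h1 : ∀ t, 1 ≤ ii t) (hub : ∀ t, ii t ≤ ℓ)
    (hgap : ∀ p q : Fin k, (q : ℕ) = (p : ℕ) + 1 → ii p + 1 < ii q)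
    (S : Set (ℕ × ℕ)) (hS : S = {pq | ∃ p q : Fin k, p ≤ q ∧ pq = (ii p, ii q)})
    (lam : Fin ℓ → ℕ) (hlam : ∃ mu, arrowC ℓ S lam mu ∨ arrowC ℓ S mu lam)
    (m : Fin k → ℕ∞)
    (hm : ∀ t, m t = if ii t = 1 then (⊤ : ℕ∞) else
      ((coord ℓ lam (ii t - 1) + coord ℓ lam (ii t) : ℕ) : ℕ∞))
    (a : ℕ) (ha : a = (∑ t, coord ℓ lam (ii t)) % 2) :
    ∃ F : {mu : Fin ℓ → ℕ //
            Relation.ReflTransGen (fun u v => arrowC ℓ S u v ∨ arrowC ℓ S v u) lam mu} ≃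
          {x : Fin k → ℕ // xiVert m a x},
      ∀ u v, arrowC ℓ S u.1 v.1 ↔ xiArrow m (F u).1 (F v).1 :=
  stmt_10_general ℓ k ii hii h1 hub hgap S hS lam hlam m hm a ha
end

section
/- Let Ψ ⊆ R^+ be an extremal set of positive roots of type A_ℓ, viewed as a set of roots α_{i,j}, with associated quiver Δ_Ψ on ℕ^ℓ. Then Ψ is regular if and only if both of the following hold: whenever α_{i,j}, α_{i,k} ∈ Ψ with j < k one has k > j + 1, and whenever α_{i,k}, α_{j,k} ∈ Ψ with i < j one has j > i + 1. -/
open RealInnerProductSpace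

/-- The coordinates of the type `A_ℓ` root `α_{i,j} = α_i + ⋯ + α_j` (`1`-based positions)
with respect to the fundamental weights. -/
def alphaA (ℓ i j : ℕ) : Fin ℓ → ℤ := fun t =>
  (if (t : ℕ) + 1 = i then 1 else 0) + (if (t : ℕ) + 1 = j then 1 else 0)
    - (if (t : ℕ) + 2 = i then 1 else 0) - (if (t : ℕ) = j then 1 else 0)

/-- The arrow relation of the quiver `Δ_Ψ` on `ℕ^ℓ` where `Ψ` is given by a set `S` of index
pairs `(i, j)` : an arrow `λ ← λ + α_{i,j}` for `(i, j) ∈ S` whenever `λ_{i−1} ≥ 1`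
(no condition when `i = 1`) and `λ_{j+1} ≥ 1` (no condition when `j = ℓ`). -/
def arrowA (ℓ : ℕ) (S : Set (ℕ × ℕ)) (lam mu : Fin ℓ → ℕ) : Prop :=
  ∃ p ∈ S, (∀ t : Fin ℓ, (mu t : ℤ) = (lam t : ℤ) + alphaA ℓ p.1 p.2 t) ∧
    (∀ t : Fin ℓ, (t : ℕ) + 2 = p.1 → 1 ≤ lam t) ∧
    (∀ t : Fin ℓ, (t : ℕ) = p.2 → 1 ≤ lam t)

/-- `t_{λ,η}` : the number of `μ ∈ ℕ^ℓ` with arrows `λ ← μ` and `μ ← λ + η`. -/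
noncomputable def tCount (ℓ : ℕ) (S : Set (ℕ × ℕ)) (lam : Fin ℓ → ℕ) (η : Fin ℓ → ℤ) : ℕ :=
  Nat.card {mu : Fin ℓ → ℕ | arrowA ℓ S lam mu ∧
    ∃ nu : Fin ℓ → ℕ, (∀ t, (nu t : ℤ) = (lam t : ℤ) + η t) ∧ arrowA ℓ S mu nu}

/-- `m_η` : the number of ordered pairs `(β, β') ∈ Ψ × Ψ` of roots with `β + β' = η`. -/
noncomputable def mCount (ℓ : ℕ) (Ψv : Set (Fin ℓ → ℤ)) (η : Fin ℓ → ℤ) : ℕ :=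
  Nat.card {bb : (Fin ℓ → ℤ) × (Fin ℓ → ℤ) | bb.1 ∈ Ψv ∧ bb.2 ∈ Ψv ∧ bb.1 + bb.2 = η}

/-- The vector `ε_pos ∈ ℝ^{ℓ+1}` at the `1`-based position `pos` (and `0` out of range). -/
noncomputable def epsA (ℓ pos : ℕ) : EuclideanSpace ℝ (Fin (ℓ + 1)) :=
  if h : 1 ≤ pos ∧ pos ≤ ℓ + 1 then EuclideanSpace.single ⟨pos - 1, by omega⟩ 1 else 0

/-- The root system of type `A_ℓ`, realized in `ℝ^{ℓ+1}` as
`{ε_a − ε_b : a ≠ b}`. -/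
def RrootA (ℓ : ℕ) : Set (EuclideanSpace ℝ (Fin (ℓ + 1))) :=
  {v | ∃ a b : Fin (ℓ + 1), a ≠ b ∧
    v = EuclideanSpace.single a (1 : ℝ) - EuclideanSpace.single b (1 : ℝ)}

/-!
Extremality makes `Ψ` a product set: `α_{i,j} ∈ Ψ` iff `i ∈ I` and `j ∈ J`, with `I ≤ J`.
An arrow `λ ← λ + β` exists iff `β ∈ Ψ` and `λ + β ∈ ℕ^ℓ`, so for `λ + η ∈ ℕ^ℓ` the number
`t_{λ,η}` counts the decompositions `η = β + β'` with `λ + β ∈ ℕ^ℓ`, while `m_η` counts all of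
them. The negative coordinates of `α_{a,b}` sit at `a - 1` and `b + 1`; if no two starts and no
two ends in `I`, `J` are adjacent, they remain negative coordinates of `η = α_{a,b} + α_{c,d}`, so
`λ + η ∈ ℕ^ℓ` forces `λ + β ∈ ℕ^ℓ` for every decomposition and `t = m`. Conversely, if
`α_{i,j}, α_{i,j+1} ∈ Ψ`, a `λ` vanishing only at `j + 1` admits `α_{i,j+1}` but not `α_{i,j}`,
so `0 < t < m`; adjacent starts are handled alike.
-/

section

variable {ℓ : ℕ} {S : Set (ℕ × ℕ)}

def ShiftNonneg {ι : Type*} (lam : ι → ℕ) (v : ι → ℤ) : Prop :=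
  ∀ t, 0 ≤ (lam t : ℤ) + v t

abbrev rootSet (ℓ : ℕ) (S : Set (ℕ × ℕ)) : Set (Fin ℓ → ℤ) :=
  {v | ∃ p ∈ S, v = alphaA ℓ p.1 p.2}

def decomps {ι : Type*} (Ψ : Set (ι → ℤ)) (η : ι → ℤ) : Set (ι → ℤ) :=
  {β | β ∈ Ψ ∧ η - β ∈ Ψ}

lemma neg_one_le_alphaA {a b : ℕ} (hab : a ≤ b) (t : Fin ℓ) : -1 ≤ alphaA ℓ a b t := by
  unfold alphaA; split_ifs <;> omega

lemma alphaA_neg_iff {a b : ℕ} (hab : a ≤ b) (t : Fin ℓ) :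
    alphaA ℓ a b t < 0 ↔ (t : ℕ) + 2 = a ∨ (t : ℕ) = b := by
  unfold alphaA; split_ifs <;> omega

lemma shiftNonneg_alphaA_iff {a b : ℕ} (hab : a ≤ b) (lam : Fin ℓ → ℕ) :
    ShiftNonneg lam (alphaA ℓ a b) ↔
      (∀ t : Fin ℓ, (t : ℕ) + 2 = a → 1 ≤ lam t) ∧ (∀ t : Fin ℓ, (t : ℕ) = b → 1 ≤ lam t) := by
  have key (t : Fin ℓ) :
      0 ≤ (lam t : ℤ) + alphaA ℓ a b t ↔ ((t : ℕ) + 2 = a ∨ (t : ℕ) = b → 1 ≤ lam t) := by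
    have := neg_one_le_alphaA hab t
    have := alphaA_neg_iff hab t
    omega
  simp only [ShiftNonneg, key]
  exact ⟨fun h => ⟨fun t ht => h t (.inl ht), fun t ht => h t (.inr ht)⟩,
    fun h t ht => ht.elim (h.1 t) (h.2 t)⟩

lemma arrowA_iff (hS : ∀ p ∈ S, p.1 ≤ p.2) (lam mu : Fin ℓ → ℕ) :
    arrowA ℓ S lam mu ↔ (fun t => (mu t : ℤ) - lam t) ∈ rootSet ℓ S := by
  constructor
  · rintro ⟨p, hp, hmu, -⟩
    exact ⟨p, hp, funext fun t => by rw [hmu]; ring⟩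
  · rintro ⟨p, hp, hmu⟩
    have hmu' (t : Fin ℓ) : (mu t : ℤ) = lam t + alphaA ℓ p.1 p.2 t := by
      rw [← congrFun hmu t]; ring
    refine ⟨p, hp, hmu', (shiftNonneg_alphaA_iff (hS p hp) lam).1 fun t => ?_⟩
    rw [← hmu']
    positivity

lemma tCount_eq_ncard (hS : ∀ p ∈ S, p.1 ≤ p.2) (lam : Fin ℓ → ℕ) (η : Fin ℓ → ℤ) :
    tCount ℓ S lam η =
      {β ∈ decomps (rootSet ℓ S) η | ShiftNonneg lam β ∧ ShiftNonneg lam η}.ncard := by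
  have hinj : Function.Injective fun (mu : Fin ℓ → ℕ) t => (mu t : ℤ) - lam t :=
    fun mu mu' h => funext fun t => by have := congrFun h t; simp only at this; omega
  rw [tCount, Nat.card_coe_set_eq, ← Set.ncard_image_of_injective _ hinj]
  congr 1
  ext β
  simp only [Set.mem_image, Set.mem_ofPred_eq, arrowA_iff hS, decomps]
  constructor
  · rintro ⟨mu, ⟨hmu, nu, hnu, hnu'⟩, rfl⟩
    have hsub : (fun t => (nu t : ℤ) - mu t) = η - fun t => (mu t : ℤ) - lam t :=
      funext fun t => by simp only [Pi.sub_apply, hnu]; ring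
    exact ⟨⟨hmu, hsub ▸ hnu'⟩, fun t => by simp, fun t => by rw [← hnu]; positivity⟩
  · rintro ⟨⟨hβ, hηβ⟩, hlamβ, hlamη⟩
    have hmu : (fun t => ((((lam t : ℤ) + β t).toNat : ℕ) : ℤ) - lam t) = β :=
      funext fun t => by simp only [Int.toNat_of_nonneg (hlamβ t)]; ring
    have hnu : (fun t => ((((lam t : ℤ) + η t).toNat : ℕ) : ℤ) - (((lam t : ℤ) + β t).toNat : ℕ))
        = η - β :=
      funext fun t => by
        simp only [Int.toNat_of_nonneg (hlamβ t), Int.toNat_of_nonneg (hlamη t), Pi.sub_apply]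
        ring
    refine ⟨_, ⟨?_, _, fun t => Int.toNat_of_nonneg (hlamη t), ?_⟩, hmu⟩
    · rwa [hmu]
    · rwa [hnu]

lemma mCount_eq_ncard (Ψ : Set (Fin ℓ → ℤ)) (η : Fin ℓ → ℤ) :
    mCount ℓ Ψ η = (decomps Ψ η).ncard := by
  have hinj : Function.Injective fun β : Fin ℓ → ℤ => (β, η - β) :=
    fun β β' h => congrArg Prod.fst h
  rw [mCount, Nat.card_coe_set_eq, ← Set.ncard_image_of_injective _ hinj]
  congr 1
  ext ⟨β, β'⟩
  simp only [Set.mem_ofPred_eq, Set.mem_image, decomps, Prod.mk.injEq]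
  constructor
  · rintro ⟨hβ, hβ', rfl⟩
    exact ⟨β, ⟨hβ, by simpa using hβ'⟩, rfl, by simp⟩
  · rintro ⟨β, ⟨hβ, hβ'⟩, rfl, rfl⟩
    exact ⟨hβ, hβ', by simp⟩

lemma rootSet_finite (hS : ∀ p ∈ S, 1 ≤ p.1 ∧ p.1 ≤ p.2 ∧ p.2 ≤ ℓ) : (rootSet ℓ S).Finite := by
  have hSfin : S.Finite := (Set.finite_Iic (ℓ, ℓ)).subset fun p hp =>
    Prod.mk_le_mk.2 ⟨(hS p hp).2.1.trans (hS p hp).2.2, (hS p hp).2.2⟩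
  refine (hSfin.image fun p => alphaA ℓ p.1 p.2).subset ?_
  rintro _ ⟨p, hp, rfl⟩
  exact ⟨p, hp, rfl⟩

lemma tCount_eq_mCount_of_forall_shiftNonneg (hS : ∀ p ∈ S, p.1 ≤ p.2) {lam : Fin ℓ → ℕ}
    {η : Fin ℓ → ℤ}
    (hall : ShiftNonneg lam η → ∀ β ∈ decomps (rootSet ℓ S) η, ShiftNonneg lam β)
    (hpos : 0 < tCount ℓ S lam η) : tCount ℓ S lam η = mCount ℓ (rootSet ℓ S) η := by
  rw [tCount_eq_ncard hS] at hpos ⊢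
  obtain ⟨-, -, -, hη⟩ := Set.nonempty_of_ncard_ne_zero hpos.ne'
  rw [mCount_eq_ncard]
  congr 1
  exact Set.sep_eq_self_iff_mem_true.2 fun β hβ => ⟨hall hη β hβ, hη⟩

lemma tCount_pos_and_ne_mCount (hS : ∀ p ∈ S, 1 ≤ p.1 ∧ p.1 ≤ p.2 ∧ p.2 ≤ ℓ)
    {p q : ℕ × ℕ} (hp : p ∈ S) (hq : q ∈ S) {lam : Fin ℓ → ℕ}
    (hsum : ShiftNonneg lam (alphaA ℓ p.1 p.2 + alphaA ℓ q.1 q.2))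
    (hp' : ShiftNonneg lam (alphaA ℓ p.1 p.2)) (hq' : ¬ ShiftNonneg lam (alphaA ℓ q.1 q.2)) :
    0 < tCount ℓ S lam (alphaA ℓ p.1 p.2 + alphaA ℓ q.1 q.2) ∧
      tCount ℓ S lam (alphaA ℓ p.1 p.2 + alphaA ℓ q.1 q.2) ≠
        mCount ℓ (rootSet ℓ S) (alphaA ℓ p.1 p.2 + alphaA ℓ q.1 q.2) := by
  set η := alphaA ℓ p.1 p.2 + alphaA ℓ q.1 q.2
  have hfin : (decomps (rootSet ℓ S) η).Finite := (rootSet_finite hS).subset fun _ h => h.1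
  have hpD : alphaA ℓ p.1 p.2 ∈ decomps (rootSet ℓ S) η :=
    ⟨⟨p, hp, rfl⟩, q, hq, add_sub_cancel_left _ _⟩
  have hqD : alphaA ℓ q.1 q.2 ∈ decomps (rootSet ℓ S) η :=
    ⟨⟨q, hq, rfl⟩, p, hp, add_sub_cancel_right _ _⟩
  rw [tCount_eq_ncard fun r hr => (hS r hr).2.1, mCount_eq_ncard]
  refine ⟨(Set.ncard_pos (hfin.subset (Set.sep_subset _ _))).2 ⟨_, hpD, hp', hsum⟩,
    (Set.ncard_lt_ncard ?_ hfin).ne⟩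
  exact (Set.ssubset_iff_of_subset (Set.sep_subset _ _)).2 ⟨_, hqD, fun h => hq' h.2.1⟩

lemma alphaA_add_alphaA_le_neg_one {a b c d : ℕ} (hab : a ≤ b) (had : a ≤ d) (hcb : c ≤ b)
    (hca : a ≠ c + 1) (hdb : d ≠ b + 1) (t : Fin ℓ)
    (ht : (t : ℕ) + 2 = a ∨ (t : ℕ) = b) : alphaA ℓ a b t + alphaA ℓ c d t ≤ -1 := by
  unfold alphaA; split_ifs <;> omega

lemma shiftNonneg_of_shiftNonneg_add {a b c d : ℕ} (hab : a ≤ b) (had : a ≤ d) (hcb : c ≤ b)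
    (hca : a ≠ c + 1) (hdb : d ≠ b + 1) {lam : Fin ℓ → ℕ}
    (h : ShiftNonneg lam (alphaA ℓ a b + alphaA ℓ c d)) : ShiftNonneg lam (alphaA ℓ a b) := by
  have hle t ht := alphaA_add_alphaA_le_neg_one (ℓ := ℓ) hab had hcb hca hdb t ht
  refine (shiftNonneg_alphaA_iff hab lam).2 ⟨fun t ht => ?_, fun t ht => ?_⟩ <;>
  · have h₁ := h t
    have h₂ := hle t (by tauto)
    simp only [Pi.add_apply] at h₁
    omega

lemma exists_shiftNonneg_of_adjacent_ends {i j : ℕ} (hij : i ≤ j) (hj : j < ℓ) :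
    ∃ lam : Fin ℓ → ℕ, ShiftNonneg lam (alphaA ℓ i (j + 1) + alphaA ℓ i j) ∧
      ShiftNonneg lam (alphaA ℓ i (j + 1)) ∧ ¬ ShiftNonneg lam (alphaA ℓ i j) := by
  refine ⟨fun t => if (t : ℕ) = j then 0 else 2, fun t => ?_, fun t => ?_, fun h => ?_⟩
  · simp only [Pi.add_apply, alphaA]; split_ifs <;> omega
  · simp only [alphaA]; split_ifs <;> omega
  · have := h ⟨j, hj⟩
    simp only [alphaA] at this; split_ifs at this <;> omega

lemma exists_shiftNonneg_of_adjacent_starts {i k : ℕ} (hi : 1 ≤ i) (hik : i < k) (hk : k ≤ ℓ) :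
    ∃ lam : Fin ℓ → ℕ, ShiftNonneg lam (alphaA ℓ i k + alphaA ℓ (i + 1) k) ∧
      ShiftNonneg lam (alphaA ℓ i k) ∧ ¬ ShiftNonneg lam (alphaA ℓ (i + 1) k) := by
  refine ⟨fun t => if (t : ℕ) + 1 = i then 0 else 2, fun t => ?_, fun t => ?_, fun h => ?_⟩
  · simp only [Pi.add_apply, alphaA]; split_ifs <;> omega
  · simp only [alphaA]; split_ifs <;> omega
  · have := h ⟨i - 1, by omega⟩
    simp only [alphaA] at this; split_ifs at this <;> omega

lemma shiftNonneg_of_mem_decomps (hle : ∀ p ∈ S, p.1 ≤ p.2)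
    (hrect : ∀ p ∈ S, ∀ q ∈ S, (p.1, q.2) ∈ S)
    (hends : ∀ i j k : ℕ, (i, j) ∈ S → (i, k) ∈ S → j < k → j + 1 < k)
    (hstarts : ∀ i j k : ℕ, (i, k) ∈ S → (j, k) ∈ S → i < j → i + 1 < j)
    {lam : Fin ℓ → ℕ} {η β : Fin ℓ → ℤ} (hη : ShiftNonneg lam η)
    (hβ : β ∈ decomps (rootSet ℓ S) η) : ShiftNonneg lam β := by
  obtain ⟨⟨⟨a, b⟩, hab, rfl⟩, ⟨c, d⟩, hcd, hsub⟩ := hβ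
  rw [eq_add_of_sub_eq' hsub] at hη
  have had : (a, d) ∈ S := hrect _ hab _ hcd
  have hcb : (c, b) ∈ S := hrect _ hcd _ hab
  refine shiftNonneg_of_shiftNonneg_add (hle (a, b) hab) (hle (a, d) had) (hle (c, b) hcb)
    (fun h => ?_) (fun h => ?_) hη
  · have := hstarts _ _ _ hcb hab (by omega)
    omega
  · have := hends _ _ _ hab had (by omega)
    omega

def IsMaxDiff (ℓ : ℕ) (g : ℕ → ℝ) (a b : ℕ) : Prop :=
  a ∈ Set.Icc 1 (ℓ + 1) ∧ b ∈ Set.Icc 1 (ℓ + 1) ∧ a ≠ b ∧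
    ∀ x ∈ Set.Icc 1 (ℓ + 1), ∀ y ∈ Set.Icc 1 (ℓ + 1), x ≠ y → g x - g y ≤ g a - g b

lemma mk_fst_snd_mem_of_isMaxDiff (g : ℕ → ℝ) (hle : ∀ p ∈ S, p.1 ≤ p.2)
    (hS : ∀ a b, (a, b) ∈ S ↔ IsMaxDiff ℓ g a (b + 1)) {p q : ℕ × ℕ} (hp : p ∈ S) (hq : q ∈ S) :
    (p.1, q.2) ∈ S := by
  have hmax {r : ℕ × ℕ} (hr : r ∈ S) : IsMaxDiff ℓ g r.1 (r.2 + 1) := (hS r.1 r.2).1 hr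
  obtain ⟨⟨hp1, hp1'⟩, hp2, hpne, hpmax⟩ := hmax hp
  obtain ⟨hq1, ⟨hq2, hq2'⟩, -⟩ := hmax hq
  set M := g p.1 - g (p.2 + 1)
  have hval {r : ℕ × ℕ} (hr : r ∈ S) : g r.1 - g (r.2 + 1) = M := by
    obtain ⟨hr1, hr2, hrne, hrmax⟩ := hmax hr
    exact le_antisymm (hpmax _ hr1 _ hr2 hrne) (hrmax _ ⟨hp1, hp1'⟩ _ hp2 hpne)
  have hM : 0 < M := by
    by_contra! hM
    have hrev : IsMaxDiff ℓ g (p.2 + 1) (p.1 - 1 + 1) := by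
      rw [Nat.sub_add_cancel hp1]
      refine ⟨hp2, ⟨hp1, hp1'⟩, hpne.symm, fun x hx y hy hxy => ?_⟩
      linarith [hpmax x hx y hy hxy]
    have h₁ := hle _ ((hS _ _).2 hrev)
    have h₂ := hle p hp
    simp only at h₁
    omega
  -- otherwise `g s.1 - g (r.2 + 1) = 2 M` would exceed the maximum
  have hne {r s : ℕ × ℕ} (hr : r ∈ S) (hs : s ∈ S) : r.1 ≠ s.2 + 1 := by
    intro h
    obtain ⟨-, hr2, -⟩ := hmax hr
    obtain ⟨hs1, -⟩ := hmax hs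
    have := hpmax s.1 hs1 (r.2 + 1) hr2 (by have := hle r hr; have := hle s hs; omega)
    have := hval hr
    have := hval hs
    rw [h] at *
    linarith
  refine (hS _ _).2 ⟨⟨hp1, hp1'⟩, ⟨hq2, hq2'⟩, hne hp hq, fun x hx y hy hxy => ?_⟩
  have := hpmax q.1 hq1 (p.2 + 1) hp2 (hne hq hp)
  linarith [hpmax x hx y hy hxy, hval hq]

lemma epsA_eq_single {x : ℕ} (hx : x ∈ Set.Icc 1 (ℓ + 1)) :
    epsA ℓ x = EuclideanSpace.single ⟨x - 1, by grind⟩ 1 := by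
  rw [epsA, dif_pos (show 1 ≤ x ∧ x ≤ ℓ + 1 from hx)]

lemma epsA_sub_epsA_mem_RrootA {x y : ℕ} (hx : x ∈ Set.Icc 1 (ℓ + 1))
    (hy : y ∈ Set.Icc 1 (ℓ + 1)) (hxy : x ≠ y) : epsA ℓ x - epsA ℓ y ∈ RrootA ℓ := by
  refine ⟨⟨x - 1, by grind⟩, ⟨y - 1, by grind⟩, ?_, by rw [epsA_eq_single hx, epsA_eq_single hy]⟩
  simp only [ne_eq, Fin.mk.injEq]
  grind

lemma exists_epsA_sub_epsA_of_mem_RrootA {β : EuclideanSpace ℝ (Fin (ℓ + 1))}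
    (hβ : β ∈ RrootA ℓ) : ∃ x ∈ Set.Icc 1 (ℓ + 1), ∃ y ∈ Set.Icc 1 (ℓ + 1), x ≠ y ∧
      β = epsA ℓ x - epsA ℓ y := by
  obtain ⟨a, b, hab, rfl⟩ := hβ
  have ha : (a : ℕ) + 1 ∈ Set.Icc 1 (ℓ + 1) := ⟨by omega, by omega⟩
  have hb : (b : ℕ) + 1 ∈ Set.Icc 1 (ℓ + 1) := ⟨by omega, by omega⟩
  refine ⟨_, ha, _, hb, by simpa [Fin.ext_iff] using hab, ?_⟩
  rw [epsA_eq_single ha, epsA_eq_single hb]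
  rfl

lemma eq_and_eq_of_epsA_sub_epsA_eq {x y u v : ℕ} (hx : x ∈ Set.Icc 1 (ℓ + 1))
    (hy : y ∈ Set.Icc 1 (ℓ + 1)) (hu : u ∈ Set.Icc 1 (ℓ + 1)) (hv : v ∈ Set.Icc 1 (ℓ + 1))
    (hxy : x ≠ y) (h : epsA ℓ x - epsA ℓ y = epsA ℓ u - epsA ℓ v) :
    x = u ∧ y = v := by
  rw [epsA_eq_single hx, epsA_eq_single hy, epsA_eq_single hu, epsA_eq_single hv] at h
  have ex := congrArg (· ⟨x - 1, by grind⟩) h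
  have ey := congrArg (· ⟨y - 1, by grind⟩) h
  simp only [PiLp.sub_apply, PiLp.single_apply, Fin.mk.injEq] at ex ey
  simp only [Set.mem_Icc] at hx hy hu hv
  split_ifs at ex ey <;> grind

lemma mem_iff_isMaxDiff (hS : ∀ p ∈ S, 1 ≤ p.1 ∧ p.1 ≤ p.2 ∧ p.2 ≤ ℓ)
    {ξ : EuclideanSpace ℝ (Fin (ℓ + 1))}
    (hξ : {v | ∃ p ∈ S, v = epsA ℓ p.1 - epsA ℓ (p.2 + 1)} =
      {α | α ∈ RrootA ℓ ∧ ∀ β ∈ RrootA ℓ, ⟪ξ, β⟫ ≤ ⟪ξ, α⟫}) (a b : ℕ) :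
    (a, b) ∈ S ↔ IsMaxDiff ℓ (fun s => ⟪ξ, epsA ℓ s⟫) a (b + 1) := by
  constructor
  · intro hab
    have hmem : epsA ℓ a - epsA ℓ (b + 1) ∈
        {α | α ∈ RrootA ℓ ∧ ∀ β ∈ RrootA ℓ, ⟪ξ, β⟫ ≤ ⟪ξ, α⟫} := hξ ▸ ⟨(a, b), hab, rfl⟩
    have := hS _ hab
    refine ⟨⟨by grind, by grind⟩, ⟨by grind, by grind⟩, by grind, fun x hx y hy hxy => ?_⟩
    simpa only [inner_sub_right] using hmem.2 _ (epsA_sub_epsA_mem_RrootA hx hy hxy)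
  · rintro ⟨ha, hb, hab, hmax⟩
    have hmem :
        epsA ℓ a - epsA ℓ (b + 1) ∈ {v | ∃ p ∈ S, v = epsA ℓ p.1 - epsA ℓ (p.2 + 1)} := by
      refine hξ ▸ ⟨epsA_sub_epsA_mem_RrootA ha hb hab, fun β hβ => ?_⟩
      obtain ⟨x, hx, y, hy, hxy, rfl⟩ := exists_epsA_sub_epsA_of_mem_RrootA hβ
      simpa only [inner_sub_right] using hmax x hx y hy hxy
    obtain ⟨r, hr, hr'⟩ := hmem
    have := hS r hr
    obtain ⟨rfl, h⟩ := eq_and_eq_of_epsA_sub_epsA_eq ha hb ⟨by grind, by grind⟩ ⟨by grind, by grind⟩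
      hab hr'
    obtain rfl : b = r.2 := by omega
    exact hr

end

theorem stmt_13_general (ℓ : ℕ)
    (S : Set (ℕ × ℕ)) (hSrange : ∀ p ∈ S, 1 ≤ p.1 ∧ p.1 ≤ p.2 ∧ p.2 ≤ ℓ)
    (hext : ∃ ξ : EuclideanSpace ℝ (Fin (ℓ + 1)),
      {v | ∃ p ∈ S, v = epsA ℓ p.1 - epsA ℓ (p.2 + 1)} =
        {α | α ∈ RrootA ℓ ∧ ∀ β ∈ RrootA ℓ, ⟪ξ, β⟫ ≤ ⟪ξ, α⟫})
    (Ψv : Set (Fin ℓ → ℤ)) (hΨv : Ψv = {v | ∃ p ∈ S, v = alphaA ℓ p.1 p.2}) :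
    (∀ η : Fin ℓ → ℤ, (∃ v ∈ Ψv, ∃ w ∈ Ψv, η = v + w) →
        ∀ lam : Fin ℓ → ℕ, 0 < tCount ℓ S lam η → tCount ℓ S lam η = mCount ℓ Ψv η) ↔
      ((∀ i j k : ℕ, (i, j) ∈ S → (i, k) ∈ S → j < k → j + 1 < k) ∧
        (∀ i j k : ℕ, (i, k) ∈ S → (j, k) ∈ S → i < j → i + 1 < j)) := by
  obtain ⟨ξ, hξ⟩ := hext
  subst hΨv
  have hle : ∀ p ∈ S, p.1 ≤ p.2 := fun p hp => (hSrange p hp).2.1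
  have hrect : ∀ p ∈ S, ∀ q ∈ S, (p.1, q.2) ∈ S := fun p hp q hq =>
    mk_fst_snd_mem_of_isMaxDiff _ hle (mem_iff_isMaxDiff hSrange hξ) hp hq
  constructor
  · intro hreg
    have hirreg {p q : ℕ × ℕ} (hp : p ∈ S) (hq : q ∈ S) {lam : Fin ℓ → ℕ}
        (h : ShiftNonneg lam (alphaA ℓ p.1 p.2 + alphaA ℓ q.1 q.2) ∧
          ShiftNonneg lam (alphaA ℓ p.1 p.2) ∧ ¬ ShiftNonneg lam (alphaA ℓ q.1 q.2)) : False :=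
      have h' := tCount_pos_and_ne_mCount hSrange hp hq h.1 h.2.1 h.2.2
      h'.2 (hreg _ ⟨_, ⟨p, hp, rfl⟩, _, ⟨q, hq, rfl⟩, rfl⟩ lam h'.1)
    refine ⟨fun i j k hij hik hjk => ?_, fun i j k hik hjk hij => ?_⟩
    · by_contra! hk
      obtain rfl : k = j + 1 := by omega
      obtain ⟨lam, h⟩ := exists_shiftNonneg_of_adjacent_ends (ℓ := ℓ) (hSrange _ hij).2.1
        (by have := (hSrange _ hik).2.2; simp only at this; omega)
      exact hirreg hik hij h
    · by_contra! hk
      obtain rfl : j = i + 1 := by omega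
      obtain ⟨lam, h⟩ := exists_shiftNonneg_of_adjacent_starts (hSrange _ hik).1
        (hSrange _ hjk).2.1 (hSrange _ hik).2.2
      exact hirreg hik hjk h
  · rintro ⟨hends, hstarts⟩ η - lam hpos
    exact tCount_eq_mCount_of_forall_shiftNonneg hle
      (fun hη _ hβ => shiftNonneg_of_mem_decomps hle hrect hends hstarts hη hβ) hpos

/-- an extremal set `Ψ ⊆ R⁺` of positive roots of type `A_ℓ`, encoded by the
set `S` of index pairs `(i, j)` of the roots `α_{i,j} = ε_i − ε_{j+1} ∈ Ψ`, is regular iff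
`(i,j), (i,k) ∈ S` with `j < k` implies `k > j + 1`, and `(i,k), (j,k) ∈ S` with `i < j`
implies `j > i + 1`. -/
theorem stmt_13 (ℓ : ℕ) (hℓ : 1 ≤ ℓ)
    (S : Set (ℕ × ℕ)) (hSrange : ∀ p ∈ S, 1 ≤ p.1 ∧ p.1 ≤ p.2 ∧ p.2 ≤ ℓ)
    (hext : ∃ ξ : EuclideanSpace ℝ (Fin (ℓ + 1)),
      {v | ∃ p ∈ S, v = epsA ℓ p.1 - epsA ℓ (p.2 + 1)} =
        {α | α ∈ RrootA ℓ ∧ ∀ β ∈ RrootA ℓ, ⟪ξ, β⟫ ≤ ⟪ξ, α⟫})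
    (Ψv : Set (Fin ℓ → ℤ)) (hΨv : Ψv = {v | ∃ p ∈ S, v = alphaA ℓ p.1 p.2}) :
    (∀ η : Fin ℓ → ℤ, (∃ v ∈ Ψv, ∃ w ∈ Ψv, η = v + w) →
        ∀ lam : Fin ℓ → ℕ, 0 < tCount ℓ S lam η → tCount ℓ S lam η = mCount ℓ Ψv η) ↔
      ((∀ i j k : ℕ, (i, j) ∈ S → (i, k) ∈ S → j < k → j + 1 < k) ∧
        (∀ i j k : ℕ, (i, k) ∈ S → (j, k) ∈ S → i < j → i + 1 < j)) :=
  stmt_13_general ℓ S hSrange hext Ψv hΨv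
end
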